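/- (Hamiltonian Lotka–Volterra case, orders 1 to 3.) Assume λ_{1,0} = λ_{4,0} = λ_{5,0} = 0, λ_{3,0} = λ_{6,0} and λ_{2,0} ≠ 0. Then v̄_{1,1} = λ_{1,1} and v̄_{3,1} = v̄_{5,1} = v̄_{7,1} = 0. If moreover λ_{1,1} = 0, then v̄_{1,2} = λ_{1,2}, v̄_{3,2} = (λ_{3,1} − λ_{6,1}) λ_{5,1}, and v̄_{5,2} = v̄_{7,2} = 0. If in addition λ_{3,1} ≠ λ_{6,1} and λ_{1,2} = λ_{5,1} = 0, then v̄_{1,3} = λ_{1,3}, v̄_{3,3} = (λ_{3,1} − λ_{6,1}) λ_{5,2}, v̄_{5,3} = λ_{2,0}(λ_{3,1} − λ_{6,1})(λ_{4,1}+5λ_{3,1}−5λ_{6,1}) λ_{4,1}, and v̄_{7,3} = −λ_{2,0}(λ_{6,0}² + λ_{2,0}²)(λ_{3,1} − λ_{6,1})² λ_{4,1}. -/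

import Mathlib

/-!
Each of λ₄, λ₅ and λ₃ − λ₆ vanishes at ε = 0, so it is divisible by ε. Hence v₃ is divisible by
ε², and v₅, v₇ by ε³, and the first coefficient that can survive is the product of the leading
coefficients of the factors: if X^m ∣ f and X^n ∣ g, the coefficient of X^(m+n) in f g is
coeff m f · coeff n g.
-/

open PowerSeries

namespace PowerSeries

variable {R : Type*} [CommSemiring R] {f g : R⟦X⟧} {m n : ℕ}

theorem coeff_ofNat_mul (a : ℕ) [a.AtLeastTwo] (f : R⟦X⟧) :
    coeff n (OfNat.ofNat a * f) = OfNat.ofNat a * coeff n f := by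
  rw [← map_ofNat C, coeff_C_mul]

theorem X_pow_one_dvd_iff : X ^ 1 ∣ f ↔ coeff 0 f = 0 := by
  simp [X_dvd_iff]

theorem X_pow_add_dvd_mul (hf : X ^ m ∣ f) (hg : X ^ n ∣ g) : X ^ (m + n) ∣ f * g :=
  pow_add (X : R⟦X⟧) m n ▸ mul_dvd_mul hf hg

theorem coeff_add_mul_of_X_pow_dvd (hf : X ^ m ∣ f) (hg : X ^ n ∣ g) :
    coeff (m + n) (f * g) = coeff m f * coeff n g := by
  obtain ⟨a, rfl⟩ := hf
  obtain ⟨b, rfl⟩ := hg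
  rw [mul_mul_mul_comm, ← pow_add]
  simp [coeff_X_pow_mul']

end PowerSeries

namespace Bautin

variable {R : Type*} [CommRing R] (l2 l3 l4 l5 l6 : R⟦X⟧)

noncomputable def v3 : R⟦X⟧ := l5 * (l3 - l6)

noncomputable def v5 : R⟦X⟧ := l2 * l4 * (l3 - l6) * (l4 + 5 * l3 - 5 * l6)

noncomputable def v7 : R⟦X⟧ := l2 * l4 * (l3 - l6) ^ 2 * (l3 * l6 - 2 * l6 ^ 2 - l2 ^ 2)

variable {l2 l3 l4 l5 l6} {m : ℕ}

theorem X_pow_one_dvd_sub (h36 : coeff 0 l3 = coeff 0 l6) : X ^ 1 ∣ l3 - l6 :=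
  X_pow_one_dvd_iff.2 (by rw [map_sub, h36, sub_self])

theorem X_pow_one_dvd_add_five_mul_sub (h40 : coeff 0 l4 = 0) (h36 : coeff 0 l3 = coeff 0 l6) :
    X ^ 1 ∣ l4 + 5 * l3 - 5 * l6 :=
  X_pow_one_dvd_iff.2 (by rw [map_sub, map_add, coeff_ofNat_mul, coeff_ofNat_mul, h40, h36]; ring)

theorem coeff_v3_of_lt_two (h50 : coeff 0 l5 = 0) (h36 : coeff 0 l3 = coeff 0 l6) (hm : m < 2) :
    coeff m (v3 l3 l5 l6) = 0 :=
  X_pow_dvd_iff.1 (X_pow_add_dvd_mul (X_pow_one_dvd_iff.2 h50) (X_pow_one_dvd_sub h36)) m hm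

theorem coeff_two_v3 (h50 : coeff 0 l5 = 0) (h36 : coeff 0 l3 = coeff 0 l6) :
    coeff 2 (v3 l3 l5 l6) = (coeff 1 l3 - coeff 1 l6) * coeff 1 l5 := by
  rw [v3, coeff_add_mul_of_X_pow_dvd (X_pow_one_dvd_iff.2 h50) (X_pow_one_dvd_sub h36), map_sub,
    mul_comm]

theorem coeff_three_v3 (h50 : coeff 0 l5 = 0) (h51 : coeff 1 l5 = 0)
    (h36 : coeff 0 l3 = coeff 0 l6) :
    coeff 3 (v3 l3 l5 l6) = (coeff 1 l3 - coeff 1 l6) * coeff 2 l5 := by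
  have h5 : X ^ 2 ∣ l5 := X_pow_dvd_iff.2 fun m hm => by interval_cases m <;> assumption
  rw [v3, coeff_add_mul_of_X_pow_dvd h5 (X_pow_one_dvd_sub h36), map_sub, mul_comm]

theorem coeff_v5_of_lt_three (h40 : coeff 0 l4 = 0) (h36 : coeff 0 l3 = coeff 0 l6)
    (hm : m < 3) : coeff m (v5 l2 l3 l4 l6) = 0 := by
  have h24 := X_pow_add_dvd_mul (by simp : X ^ 0 ∣ l2) (X_pow_one_dvd_iff.2 h40)
  exact X_pow_dvd_iff.1 (X_pow_add_dvd_mul (X_pow_add_dvd_mul h24 (X_pow_one_dvd_sub h36))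
    (X_pow_one_dvd_add_five_mul_sub h40 h36)) m hm

theorem coeff_three_v5 (h40 : coeff 0 l4 = 0) (h36 : coeff 0 l3 = coeff 0 l6) :
    coeff 3 (v5 l2 l3 l4 l6) = coeff 0 l2 * (coeff 1 l3 - coeff 1 l6)
      * (coeff 1 l4 + 5 * coeff 1 l3 - 5 * coeff 1 l6) * coeff 1 l4 := by
  have h2 : X ^ 0 ∣ l2 := by simp
  have h4 := X_pow_one_dvd_iff.2 h40
  have hd := X_pow_one_dvd_sub h36
  rw [v5, coeff_add_mul_of_X_pow_dvd (X_pow_add_dvd_mul (X_pow_add_dvd_mul h2 h4) hd)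
      (X_pow_one_dvd_add_five_mul_sub h40 h36),
    coeff_add_mul_of_X_pow_dvd (X_pow_add_dvd_mul h2 h4) hd, coeff_add_mul_of_X_pow_dvd h2 h4,
    map_sub, map_sub, map_add, coeff_ofNat_mul, coeff_ofNat_mul]
  ring

theorem coeff_v7_of_lt_three (h40 : coeff 0 l4 = 0) (h36 : coeff 0 l3 = coeff 0 l6)
    (hm : m < 3) : coeff m (v7 l2 l3 l4 l6) = 0 := by
  have h24 := X_pow_add_dvd_mul (by simp : X ^ 0 ∣ l2) (X_pow_one_dvd_iff.2 h40)
  have hd := X_pow_one_dvd_sub h36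
  have hd2 : X ^ 2 ∣ (l3 - l6) ^ 2 := sq (l3 - l6) ▸ X_pow_add_dvd_mul hd hd
  exact X_pow_dvd_iff.1 (X_pow_add_dvd_mul (X_pow_add_dvd_mul h24 hd2)
    (by simp : X ^ 0 ∣ l3 * l6 - 2 * l6 ^ 2 - l2 ^ 2)) m hm

theorem coeff_three_v7 (h40 : coeff 0 l4 = 0) (h36 : coeff 0 l3 = coeff 0 l6) :
    coeff 3 (v7 l2 l3 l4 l6) = -(coeff 0 l2 * ((coeff 0 l6) ^ 2 + (coeff 0 l2) ^ 2)
        * (coeff 1 l3 - coeff 1 l6) ^ 2 * coeff 1 l4) := by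
  have h2 : X ^ 0 ∣ l2 := by simp
  have h4 := X_pow_one_dvd_iff.2 h40
  have hd := X_pow_one_dvd_sub h36
  have hd2 : X ^ 2 ∣ (l3 - l6) ^ 2 := sq (l3 - l6) ▸ X_pow_add_dvd_mul hd hd
  have hr : coeff 0 (l3 * l6 - 2 * l6 ^ 2 - l2 ^ 2) = -(coeff 0 l6 ^ 2 + coeff 0 l2 ^ 2) := by
    simp only [coeff_zero_eq_constantCoeff_apply, map_sub, map_mul, map_pow, map_ofNat] at h36 ⊢
    rw [h36]
    ring
  rw [v7, coeff_add_mul_of_X_pow_dvd (X_pow_add_dvd_mul (X_pow_add_dvd_mul h2 h4) hd2)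
      (by simp : X ^ 0 ∣ l3 * l6 - 2 * l6 ^ 2 - l2 ^ 2),
    coeff_add_mul_of_X_pow_dvd (X_pow_add_dvd_mul h2 h4) hd2, coeff_add_mul_of_X_pow_dvd h2 h4, sq,
    coeff_add_mul_of_X_pow_dvd hd hd, hr, map_sub]
  ring

end Bautin

theorem hamiltonian_lotka_volterra_low_order_general
    (l1 l2 l3 l4 l5 l6 : PowerSeries ℝ)
    (v1 v3 v5 v7 : PowerSeries ℝ)
    (hv1 : v1 = l1)
    (hv3 : v3 = l5 * (l3 - l6))
    (hv5 : v5 = l2 * l4 * (l3 - l6) * (l4 + 5 * l3 - 5 * l6))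
    (hv7 : v7 = l2 * l4 * (l3 - l6) ^ 2 * (l3 * l6 - 2 * l6 ^ 2 - l2 ^ 2))
    (h40 : coeff 0 l4 = 0)
    (h50 : coeff 0 l5 = 0)
    (h36 : coeff 0 l3 = coeff 0 l6) :
    coeff 1 v1 = coeff 1 l1 ∧ coeff 1 v3 = 0 ∧ coeff 1 v5 = 0 ∧ coeff 1 v7 = 0 ∧
    (coeff 1 l1 = 0 →
      coeff 2 v1 = coeff 2 l1 ∧
      coeff 2 v3 = (coeff 1 l3 - coeff 1 l6) * coeff 1 l5 ∧
      coeff 2 v5 = 0 ∧ coeff 2 v7 = 0) ∧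
    (coeff 1 l1 = 0 → coeff 1 l3 ≠ coeff 1 l6 → coeff 2 l1 = 0 → coeff 1 l5 = 0 →
      coeff 3 v1 = coeff 3 l1 ∧
      coeff 3 v3 = (coeff 1 l3 - coeff 1 l6) * coeff 2 l5 ∧
      coeff 3 v5 = coeff 0 l2 * (coeff 1 l3 - coeff 1 l6)
        * (coeff 1 l4 + 5 * coeff 1 l3 - 5 * coeff 1 l6) * coeff 1 l4 ∧
      coeff 3 v7 = -(coeff 0 l2 * ((coeff 0 l6) ^ 2 + (coeff 0 l2) ^ 2)
        * (coeff 1 l3 - coeff 1 l6) ^ 2 * coeff 1 l4)) := by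
  subst hv1
  obtain rfl : v3 = Bautin.v3 l3 l5 l6 := hv3
  obtain rfl : v5 = Bautin.v5 l2 l3 l4 l6 := hv5
  obtain rfl : v7 = Bautin.v7 l2 l3 l4 l6 := hv7
  exact ⟨rfl, Bautin.coeff_v3_of_lt_two h50 h36 one_lt_two,
    Bautin.coeff_v5_of_lt_three h40 h36 (by norm_num),
    Bautin.coeff_v7_of_lt_three h40 h36 (by norm_num),
    fun _ => ⟨rfl, Bautin.coeff_two_v3 h50 h36, Bautin.coeff_v5_of_lt_three h40 h36 (by norm_num),
      Bautin.coeff_v7_of_lt_three h40 h36 (by norm_num)⟩,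
    fun _ _ _ h51 => ⟨rfl, Bautin.coeff_three_v3 h50 h51 h36, Bautin.coeff_three_v5 h40 h36,
      Bautin.coeff_three_v7 h40 h36⟩⟩

/-- Hamiltonian Lotka–Volterra case, orders 1 to 3. -/
theorem hamiltonian_lotka_volterra_low_order
    (l1 l2 l3 l4 l5 l6 : PowerSeries ℝ)
    (v1 v3 v5 v7 : PowerSeries ℝ)
    (hv1 : v1 = l1)
    (hv3 : v3 = l5 * (l3 - l6))
    (hv5 : v5 = l2 * l4 * (l3 - l6) * (l4 + 5 * l3 - 5 * l6))
    (hv7 : v7 = l2 * l4 * (l3 - l6) ^ 2 * (l3 * l6 - 2 * l6 ^ 2 - l2 ^ 2))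
    (h10 : coeff 0 l1 = 0)
    (h40 : coeff 0 l4 = 0)
    (h50 : coeff 0 l5 = 0)
    (h36 : coeff 0 l3 = coeff 0 l6)
    (h20 : coeff 0 l2 ≠ 0) :
    coeff 1 v1 = coeff 1 l1 ∧ coeff 1 v3 = 0 ∧ coeff 1 v5 = 0 ∧ coeff 1 v7 = 0 ∧
    (coeff 1 l1 = 0 →
      coeff 2 v1 = coeff 2 l1 ∧
      coeff 2 v3 = (coeff 1 l3 - coeff 1 l6) * coeff 1 l5 ∧
      coeff 2 v5 = 0 ∧ coeff 2 v7 = 0) ∧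
    (coeff 1 l1 = 0 → coeff 1 l3 ≠ coeff 1 l6 → coeff 2 l1 = 0 → coeff 1 l5 = 0 →
      coeff 3 v1 = coeff 3 l1 ∧
      coeff 3 v3 = (coeff 1 l3 - coeff 1 l6) * coeff 2 l5 ∧
      coeff 3 v5 = coeff 0 l2 * (coeff 1 l3 - coeff 1 l6)
        * (coeff 1 l4 + 5 * coeff 1 l3 - 5 * coeff 1 l6) * coeff 1 l4 ∧
      coeff 3 v7 = -(coeff 0 l2 * ((coeff 0 l6) ^ 2 + (coeff 0 l2) ^ 2)
        * (coeff 1 l3 - coeff 1 l6) ^ 2 * coeff 1 l4)) :=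
  hamiltonian_lotka_volterra_low_order_general l1 l2 l3 l4 l5 l6 v1 v3 v5 v7 hv1 hv3 hv5 hv7 h40 h50
    h36
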